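/- Let θ(t) be defined by θ(0) = 1 and θ(t+1) = (−θ(t)² + √(θ(t)⁴ + 4θ(t)²))/2. Then θ(t) ≤ 2/(t + 2) for all t ≥ 0. -/
import Mathlib


theorem nesterov_momentum_decay (θ : ℕ → ℝ) (h0 : θ 0 = 1)
    (hrec : ∀ t, θ (t + 1) = (-θ t ^ 2 + Real.sqrt (θ t ^ 4 + 4 * θ t ^ 2)) / 2) :
    ∀ t, θ t ≤ 2 / (t + 2 : ℝ) := by
  have key : ∀ t, 0 < θ t ∧ θ t ≤ 2 / (t + 2 : ℝ) := by
    intro t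
    induction t with
    | zero => constructor <;> simp [h0] <;> norm_num
    | succ n ih =>
      obtain ⟨hp, hb⟩ := ih
      set a := θ n with ha
      have hd : (0:ℝ) < (n:ℝ) + 2 := by positivity
      have hd1 : (0:ℝ) < (n:ℝ) + 3 := by positivity
      have ha2 : a ^ 2 * ((n:ℝ) + 2) ^ 2 ≤ 4 := by
        have : a ≤ 2 / ((n:ℝ) + 2) := hb
        have h2 : a * ((n:ℝ) + 2) ≤ 2 := (le_div_iff₀ hd).mp hb
        nlinarith [hp.le, hd.le, mul_pos hp hd]
      have hnn : (0:ℝ) ≤ a ^ 4 + 4 * a ^ 2 := by positivity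
      have hS : Real.sqrt (a ^ 4 + 4 * a ^ 2) ≤ 2 * (2 / ((n:ℝ) + 3)) + a ^ 2 := by
        have hr : (0:ℝ) ≤ 2 * (2 / ((n:ℝ) + 3)) + a ^ 2 := by positivity
        rw [show (2 * (2 / ((n:ℝ) + 3)) + a ^ 2)
            = Real.sqrt ((2 * (2 / ((n:ℝ) + 3)) + a ^ 2) ^ 2) from
          (Real.sqrt_sq hr).symm]
        apply Real.sqrt_le_sqrt
        have hb3 : 2 / ((n:ℝ) + 3) = 2 / ((n:ℝ) + 3) := rfl
        have key2 : 4 * a ^ 2 * ((n:ℝ) + 3) ^ 2 ≤ 16 + 8 * (((n:ℝ) + 3)) * a ^ 2 := by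
          nlinarith [sq_nonneg a, ha2, hd.le]
        have h3 : 4 * a ^ 2 ≤ 4 * (2 / ((n:ℝ) + 3)) ^ 2 + 4 * (2 / ((n:ℝ) + 3)) * a ^ 2 := by
          rw [div_pow, ← sub_nonneg]
          have heq : 4 * ((2:ℝ) ^ 2 / ((n:ℝ) + 3) ^ 2) + 4 * (2 / ((n:ℝ) + 3)) * a ^ 2 - 4 * a ^ 2
              = (16 + 8 * ((n:ℝ) + 3) * a ^ 2 - 4 * a ^ 2 * ((n:ℝ) + 3) ^ 2) / ((n:ℝ) + 3) ^ 2 := by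
            field_simp; ring
          rw [heq]
          apply div_nonneg _ (by positivity)
          linarith
        nlinarith [h3]
      have hgt : a ^ 2 < Real.sqrt (a ^ 4 + 4 * a ^ 2) := by
        rw [show a ^ 4 + 4 * a ^ 2 = (a ^ 2) ^ 2 + 4 * a ^ 2 by ring]
        have := Real.lt_sqrt (x := a ^ 2) (y := (a ^ 2) ^ 2 + 4 * a ^ 2) (by positivity)
        rw [this]
        nlinarith [hp]
      constructor
      · rw [hrec n]
        have : 0 < -a ^ 2 + Real.sqrt (a ^ 4 + 4 * a ^ 2) := by linarith
        linarith
      · rw [hrec n]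
        push_cast
        rw [show ((n:ℝ) + 1 + 2) = (n:ℝ) + 3 from by ring]
        linarith
  intro t; exact (key t).2
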